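/- Define β(p) = 1/(p+1) for primes p ≡ 1 (mod 4) and β(p) = (p+1)/(p²+1) for primes p ≡ 3 (mod 4). Then the product over all odd primes p of (1 − β(p))/(1 − p⁻¹) converges, and 2 · ∏_{p odd prime} (1 − β(p))/(1 − p⁻¹) = 2 · L(2,χ₄); equivalently, ∏_{p ≡ 1 (4)} p²/(p² − 1) · ∏_{p ≡ 3 (4)} p²/(p² + 1) = L(2,χ₄), where L(2,χ₄) = Σ_{k=0}^∞ (−1)^k/(2k+1)². -/

import Mathlib

/-!
For odd `p`, the factor `(1 - β(p)) / (1 - p⁻¹)` is `p² / (p² ∓ 1) = (1 - χ₄(p) p⁻²)⁻¹`, the Euler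
factor of `L(2, χ₄)`. Since `∑ χ₄(n) / n²` converges absolutely, the Euler product over all primes
equals `L(2, χ₄)` (the factor at `p = 2` is `1`), and the product over any set of primes converges
unconditionally, so it may be split along the residue of `p` mod `4`.
-/

/-- `L(2,χ₄) = Σ_{k≥0} (−1)^k/(2k+1)²`, the Dirichlet `L`-series at `2` of the
nontrivial character mod `4`. -/
noncomputable def Lchi4 : ℝ := ∑' k : ℕ, (-1 : ℝ) ^ k / (2 * (k : ℝ) + 1) ^ 2

/-- `β(p) = 1/(p+1)` for `p ≡ 1 (mod 4)` and `β(p) = (p+1)/(p²+1)` for `p ≡ 3 (mod 4)`. -/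
noncomputable def betaP (p : ℕ) : ℝ :=
  if p % 4 = 1 then 1 / ((p : ℝ) + 1) else ((p : ℝ) + 1) / ((p : ℝ) ^ 2 + 1)

open ZMod

lemma Real.multipliable_one_sub_inv_of_summable {ι : Type*} {f : ι → ℝ} (hf : Summable f) :
    Multipliable fun i ↦ (1 - f i)⁻¹ := by
  have habs : Filter.Tendsto (fun i ↦ |f i|) Filter.cofinite (nhds 0) := by
    simpa using hf.tendsto_cofinite_zero.abs
  have hsmall : ∀ᶠ i in Filter.cofinite, |f i| ≤ 1 / 2 := habs.eventually_le_const one_half_pos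
  have hsub : Summable fun i ↦ (1 - f i)⁻¹ - 1 := by
    refine (hf.norm.mul_left 2).of_norm_bounded_eventually ?_
    filter_upwards [hsmall] with i hi
    have hpos : 1 / 2 ≤ 1 - f i := by linarith [le_abs_self (f i)]
    rw [Real.norm_eq_abs, Real.norm_eq_abs,
      show (1 - f i)⁻¹ - 1 = f i / (1 - f i) by field_simp; ring, abs_div,
      abs_of_pos (by linarith : 0 < 1 - f i), div_le_iff₀ (by linarith)]
    nlinarith [abs_nonneg (f i)]
  simpa using Real.multipliable_one_add_of_summable hsub

noncomputable def chi4Summand : ℕ →*₀ ℝ where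
  toFun n := (χ₄ n : ℝ) / (n : ℝ) ^ 2
  map_zero' := by simp
  map_one' := by simp
  map_mul' m n := by push_cast; rw [map_mul, Int.cast_mul, mul_pow, mul_div_mul_comm]

lemma chi4Summand_apply (n : ℕ) : chi4Summand n = (χ₄ n : ℝ) / (n : ℝ) ^ 2 := rfl

lemma abs_chi4_le_one (n : ℕ) : |(χ₄ n : ℝ)| ≤ 1 := by
  rw [χ₄_nat_eq_if_mod_four]; split_ifs <;> norm_num

lemma summable_norm_chi4Summand : Summable fun n ↦ ‖chi4Summand n‖ := by
  refine (Real.summable_nat_pow_inv.mpr one_lt_two).of_nonneg_of_le (fun _ ↦ norm_nonneg _)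
    fun n ↦ ?_
  rw [chi4Summand_apply, norm_div, norm_pow, Real.norm_natCast, div_eq_mul_inv]
  exact mul_le_of_le_one_left (by positivity) (abs_chi4_le_one n)

lemma chi4Summand_of_even {n : ℕ} (hn : n % 2 = 0) : chi4Summand n = 0 := by
  rw [chi4Summand_apply, χ₄_nat_eq_if_mod_four, if_pos hn, Int.cast_zero, zero_div]

lemma chi4Summand_two_mul_add_one (k : ℕ) :
    chi4Summand (2 * k + 1) = (-1) ^ k / (2 * (k : ℝ) + 1) ^ 2 := by
  rw [chi4Summand_apply, χ₄_eq_neg_one_pow (by omega), show (2 * k + 1) / 2 = k by omega]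
  push_cast; rfl

lemma tsum_chi4Summand : ∑' n, chi4Summand n = Lchi4 := by
  have hf := summable_norm_chi4Summand.of_norm
  rw [← tsum_even_add_odd (hf.comp_injective (mul_right_injective₀ two_ne_zero))
    (hf.comp_injective fun a b h ↦ by simpa using h)]
  simp [chi4Summand_of_even, chi4Summand_two_mul_add_one, Lchi4]

lemma tprod_odd_primes_one_sub_chi4Summand_inv :
    ∏' p : {p : ℕ // p.Prime ∧ p % 2 = 1}, (1 - chi4Summand p)⁻¹ = Lchi4 := by
  have hsupp : Function.mulSupport (fun p : Nat.Primes ↦ (1 - chi4Summand p)⁻¹) ⊆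
      Set.range (fun p : {p : ℕ // p.Prime ∧ p % 2 = 1} ↦ (⟨p.1, p.2.1⟩ : Nat.Primes)) := by
    intro p hp
    refine ⟨⟨p, p.2, p.2.eq_two_or_odd.resolve_left fun h2 ↦ hp ?_⟩, rfl⟩
    simp [h2, chi4Summand_of_even]
  have hinj : Function.Injective
      (fun p : {p : ℕ // p.Prime ∧ p % 2 = 1} ↦ (⟨p.1, p.2.1⟩ : Nat.Primes)) :=
    fun _ _ h ↦ Subtype.ext (Subtype.mk.inj h)
  exact (hinj.tprod_eq hsupp).trans <|
    (EulerProduct.eulerProduct_completely_multiplicative_tprod summable_norm_chi4Summand).trans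
      tsum_chi4Summand

lemma inv_one_sub_chi4Summand_of_mod_four_eq_one {p : ℕ} (hp : 1 < p) (h : p % 4 = 1) :
    (1 - chi4Summand p)⁻¹ = (p : ℝ) ^ 2 / ((p : ℝ) ^ 2 - 1) := by
  have hp' : (1 : ℝ) < p := by exact_mod_cast hp
  have : (p : ℝ) ^ 2 - 1 ≠ 0 := by nlinarith
  rw [chi4Summand_apply, χ₄_nat_one_mod_four h, Int.cast_one]
  field_simp

lemma inv_one_sub_chi4Summand_of_mod_four_eq_three {p : ℕ} (h : p % 4 = 3) :
    (1 - chi4Summand p)⁻¹ = (p : ℝ) ^ 2 / ((p : ℝ) ^ 2 + 1) := by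
  have : (p : ℝ) ≠ 0 := by norm_cast; omega
  have : (p : ℝ) ^ 2 + 1 ≠ 0 := by positivity
  rw [chi4Summand_apply, χ₄_nat_three_mod_four h, Int.cast_neg, Int.cast_one, neg_div,
    sub_neg_eq_add]
  field_simp

lemma one_sub_betaP_div_eq_inv_one_sub_chi4Summand {p : ℕ} (hp : 1 < p) (hodd : p % 2 = 1) :
    (1 - betaP p) / (1 - (p : ℝ)⁻¹) = (1 - chi4Summand p)⁻¹ := by
  have hp' : (1 : ℝ) < p := by exact_mod_cast hp
  have : (p : ℝ) - 1 ≠ 0 := by linarith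
  rcases (by omega : p % 4 = 1 ∨ p % 4 = 3) with h | h
  · have : (p : ℝ) ^ 2 - 1 ≠ 0 := by nlinarith
    rw [inv_one_sub_chi4Summand_of_mod_four_eq_one hp h, betaP, if_pos h]
    field_simp
    ring
  · rw [inv_one_sub_chi4Summand_of_mod_four_eq_three h, betaP, if_neg (by omega)]
    field_simp
    ring

lemma multipliable_subtype_inv_one_sub_chi4Summand (P : ℕ → Prop) :
    Multipliable fun p : {p : ℕ // P p} ↦ (1 - chi4Summand p)⁻¹ :=
  Real.multipliable_one_sub_inv_of_summable (summable_norm_chi4Summand.of_norm.subtype _)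

lemma setOf_prime_mod_four_union :
    {p : ℕ | p.Prime ∧ p % 4 = 1} ∪ {p | p.Prime ∧ p % 4 = 3} = {p | p.Prime ∧ p % 2 = 1} := by
  ext p
  have : p % 4 = 1 ∨ p % 4 = 3 ↔ p % 2 = 1 := by omega
  simp only [Set.mem_union, Set.mem_ofPred_eq]
  tauto

lemma tprod_prime_mod_four_one_mul_three {g : ℕ → ℝ}
    (hg : ∀ P : ℕ → Prop, Multipliable fun p : {p : ℕ // P p} ↦ g p) :
    (∏' p : {p : ℕ // p.Prime ∧ p % 4 = 1}, g p) * ∏' p : {p : ℕ // p.Prime ∧ p % 4 = 3}, g p =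
      ∏' p : {p : ℕ // p.Prime ∧ p % 2 = 1}, g p := by
  have hd : Disjoint {p : ℕ | p.Prime ∧ p % 4 = 1} {p | p.Prime ∧ p % 4 = 3} :=
    Set.disjoint_left.mpr fun p h1 h3 ↦ by simp_all
  exact (setOf_prime_mod_four_union ▸ Multipliable.tprod_union_disjoint hd (hg _) (hg _)).symm

theorem stmt12 :
    Multipliable (fun p : {p : ℕ // p.Prime ∧ p % 2 = 1} =>
      (1 - betaP p.1) / (1 - ((p.1 : ℝ))⁻¹)) ∧
    2 * (∏' p : {p : ℕ // p.Prime ∧ p % 2 = 1},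
        (1 - betaP p.1) / (1 - ((p.1 : ℝ))⁻¹)) = 2 * Lchi4 ∧
    (∏' p : {p : ℕ // p.Prime ∧ p % 4 = 1}, ((p.1 : ℝ) ^ 2 / ((p.1 : ℝ) ^ 2 - 1))) *
      (∏' p : {p : ℕ // p.Prime ∧ p % 4 = 3}, ((p.1 : ℝ) ^ 2 / ((p.1 : ℝ) ^ 2 + 1))) =
      Lchi4 := by
  have hodd (p : {p : ℕ // p.Prime ∧ p % 2 = 1}) :
      (1 - betaP p) / (1 - (p : ℝ)⁻¹) = (1 - chi4Summand p)⁻¹ :=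
    one_sub_betaP_div_eq_inv_one_sub_chi4Summand p.2.1.one_lt p.2.2
  have h1 (p : {p : ℕ // p.Prime ∧ p % 4 = 1}) :
      (p : ℝ) ^ 2 / ((p : ℝ) ^ 2 - 1) = (1 - chi4Summand p)⁻¹ :=
    (inv_one_sub_chi4Summand_of_mod_four_eq_one p.2.1.one_lt p.2.2).symm
  have h3 (p : {p : ℕ // p.Prime ∧ p % 4 = 3}) :
      (p : ℝ) ^ 2 / ((p : ℝ) ^ 2 + 1) = (1 - chi4Summand p)⁻¹ :=
    (inv_one_sub_chi4Summand_of_mod_four_eq_three p.2.2).symm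
  simp only [hodd, h1, h3]
  refine ⟨multipliable_subtype_inv_one_sub_chi4Summand _,
    by rw [tprod_odd_primes_one_sub_chi4Summand_inv], ?_⟩
  exact (tprod_prime_mod_four_one_mul_three (g := fun n ↦ (1 - chi4Summand n)⁻¹)
    multipliable_subtype_inv_one_sub_chi4Summand).trans
    tprod_odd_primes_one_sub_chi4Summand_inv
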